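/- Let R be a commutative ring and M, M′ two R-modules. For an R-algebra A set T(A) = (M ⊗_R A) ⊕ (M′ ⊗_R A). Define I : T(R[X]) → T(R[t,t⁻¹]) componentwise by the maps induced by X ↦ t, and J : T(R[Y]) → T(R[t,t⁻¹]) by J(b₀, b₁) = (β(b₀), −t⁻²·β′(b₁)), where β and β′ are induced by Y ↦ t⁻¹ and t⁻²· is multiplication by t⁻². Then: (a) the sequence 0 → M → T(R[X]) ⊕ T(R[Y]) → T(R[t,t⁻¹]) is exact, where the first map sends m to ((m ⊗ 1, 0), (m ⊗ 1, 0)) and the second sends (u, v) to I(u) − J(v); and (b) the map M′ → coker(I − J) sending m′ to the class of (0, m′ ⊗ t⁻¹) is an isomorphism of R-modules. -/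

import Mathlib

/-!
In coefficients, `N ⊗[R] R[X] ≃ (ℕ →₀ N)` and `N ⊗[R] R[T;T⁻¹] ≃ (ℤ →₀ N)`, and `I`, `J` become
reindexings: `Xⁿ ↦ tⁿ` and `Yⁿ ↦ t⁻ⁿ` on the `M`-component, `Xⁿ ↦ tⁿ` and `Yⁿ ↦ t⁻ⁿ⁻²` on the
`M'`-component. On the `M`-component the two ranges cover `ℤ` and meet only in `0`, so `I - J` has
kernel the constants `M` and no cokernel there. On the `M'`-component the ranges are disjoint and
miss exactly `-1`, so that component is injective with cokernel `M' ⊗ t⁻¹`.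
-/

open TensorProduct Polynomial LaurentPolynomial

noncomputable section

variable (R : Type*) [CommRing R]
variable (M : Type*) [AddCommGroup M] [Module R M]
variable (M' : Type*) [AddCommGroup M'] [Module R M']

/-- The map `M ⊗[R] R[X] → M ⊗[R] R[t,t⁻¹]` induced by the `R`-algebra map `X ↦ t`. -/
noncomputable def indT (N : Type*) [AddCommGroup N] [Module R N] :
    N ⊗[R] R[X] →ₗ[R] N ⊗[R] R[T;T⁻¹] :=
  LinearMap.lTensor N (Polynomial.toLaurentAlg : R[X] →ₐ[R] R[T;T⁻¹]).toLinearMap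

/-- The map `N ⊗[R] R[Y] → N ⊗[R] R[t,t⁻¹]` induced by the `R`-algebra map `Y ↦ t⁻¹`. -/
noncomputable def indTinv (N : Type*) [AddCommGroup N] [Module R N] :
    N ⊗[R] R[X] →ₗ[R] N ⊗[R] R[T;T⁻¹] :=
  LinearMap.lTensor N (Polynomial.aeval (T (-1) : R[T;T⁻¹]) : R[X] →ₐ[R] R[T;T⁻¹]).toLinearMap

/-- Multiplication by `t⁻²` on `N ⊗[R] R[t,t⁻¹]`. -/
noncomputable def mulTinvSq (N : Type*) [AddCommGroup N] [Module R N] :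
    N ⊗[R] R[T;T⁻¹] →ₗ[R] N ⊗[R] R[T;T⁻¹] :=
  LinearMap.lTensor N (LinearMap.mulLeft R (T (-2) : R[T;T⁻¹]))

/-- `I : T(R[X]) → T(R[t,t⁻¹])`, induced componentwise by `X ↦ t`. -/
noncomputable def Imap :
    (M ⊗[R] R[X]) × (M' ⊗[R] R[X]) →ₗ[R] (M ⊗[R] R[T;T⁻¹]) × (M' ⊗[R] R[T;T⁻¹]) :=
  LinearMap.prodMap (indT R M) (indT R M')

/-- `J(b₀, b₁) = (β(b₀), −t⁻²·β′(b₁))`, where `β, β′` are induced by `Y ↦ t⁻¹`. -/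
noncomputable def Jmap :
    (M ⊗[R] R[X]) × (M' ⊗[R] R[X]) →ₗ[R] (M ⊗[R] R[T;T⁻¹]) × (M' ⊗[R] R[T;T⁻¹]) :=
  LinearMap.prodMap (indTinv R M) (-(mulTinvSq R M' ∘ₗ indTinv R M'))

/-- The map `m ↦ ((m ⊗ 1, 0), (m ⊗ 1, 0))`. -/
noncomputable def firstMap :
    M →ₗ[R] ((M ⊗[R] R[X]) × (M' ⊗[R] R[X])) × ((M ⊗[R] R[X]) × (M' ⊗[R] R[X])) :=
  LinearMap.prod (LinearMap.prod ((TensorProduct.mk R M R[X]).flip 1) 0)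
    (LinearMap.prod ((TensorProduct.mk R M R[X]).flip 1) 0)

/-- The map `(u, v) ↦ I(u) − J(v)`. -/
noncomputable def IminusJ :
    ((M ⊗[R] R[X]) × (M' ⊗[R] R[X])) × ((M ⊗[R] R[X]) × (M' ⊗[R] R[X])) →ₗ[R]
      (M ⊗[R] R[T;T⁻¹]) × (M' ⊗[R] R[T;T⁻¹]) :=
  Imap R M M' ∘ₗ LinearMap.fst R _ _ - Jmap R M M' ∘ₗ LinearMap.snd R _ _

/-- The map `M′ → coker(I − J)`, `m′ ↦ [(0, m′ ⊗ t⁻¹)]`. -/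
noncomputable def toCokerIminusJ :
    M' →ₗ[R] ((M ⊗[R] R[T;T⁻¹]) × (M' ⊗[R] R[T;T⁻¹])) ⧸
      LinearMap.range (IminusJ R M M') :=
  (LinearMap.range (IminusJ R M M')).mkQ ∘ₗ
    LinearMap.prod 0 ((TensorProduct.mk R M' R[T;T⁻¹]).flip (T (-1)))

theorem neg_natCast_injective : Function.Injective fun n : ℕ => -(n : ℤ) :=
  neg_injective.comp Nat.cast_injective

theorem neg_natCast_sub_two_injective : Function.Injective fun n : ℕ => -(n : ℤ) - 2 :=
  (sub_left_injective (b := (2 : ℤ))).comp neg_natCast_injective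

theorem disjoint_range_natCast_range_neg_natCast_sub_two :
    Disjoint (Set.range ((↑) : ℕ → ℤ)) (Set.range fun n : ℕ => -(n : ℤ) - 2) :=
  Set.disjoint_left.mpr <| by rintro _ ⟨a, rfl⟩ ⟨b, hb⟩; dsimp only at hb; omega

namespace Finsupp

variable {α β N : Type*} [AddCommMonoid N] {e₁ e₂ : α → β}

theorem eq_zero_of_mapDomain_add_mapDomain_eq_zero (he₁ : Function.Injective e₁)
    (he₂ : Function.Injective e₂) (hd : Disjoint (Set.range e₁) (Set.range e₂))
    {f g : α →₀ N} (h : mapDomain e₁ f + mapDomain e₂ g = 0) : f = 0 ∧ g = 0 := by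
  constructor
  · ext a
    simpa [mapDomain_apply he₁, mapDomain_of_notMem_range _ _ (hd.notMem_of_mem_left ⟨a, rfl⟩)]
      using DFunLike.congr_fun h (e₁ a)
  · ext a
    simpa [mapDomain_apply he₂, mapDomain_of_notMem_range _ _ (hd.notMem_of_mem_right ⟨a, rfl⟩)]
      using DFunLike.congr_fun h (e₂ a)

theorem exists_mapDomain_add_mapDomain_eq (he₁ : Function.Injective e₁)
    (he₂ : Function.Injective e₂) (hd : Disjoint (Set.range e₁) (Set.range e₂)) (h : β →₀ N)
    (hh : ∀ b ∉ Set.range e₁ ∪ Set.range e₂, h b = 0) :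
    ∃ f g : α →₀ N, mapDomain e₁ f + mapDomain e₂ g = h := by
  refine ⟨comapDomain e₁ h he₁.injOn, comapDomain e₂ h he₂.injOn, ?_⟩
  ext b
  by_cases hb₁ : b ∈ Set.range e₁
  · obtain ⟨a, rfl⟩ := hb₁
    simp [mapDomain_apply he₁, mapDomain_of_notMem_range _ _ (hd.notMem_of_mem_left ⟨a, rfl⟩)]
  by_cases hb₂ : b ∈ Set.range e₂
  · obtain ⟨a, rfl⟩ := hb₂
    simp [mapDomain_apply he₂, mapDomain_of_notMem_range _ _ (hd.notMem_of_mem_right ⟨a, rfl⟩)]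
  simp [mapDomain_of_notMem_range _ _ hb₁, mapDomain_of_notMem_range _ _ hb₂,
    hh b (by simp [hb₁, hb₂])]

theorem mapDomain_natCast_eq_mapDomain_neg_natCast_iff {f g : ℕ →₀ N} :
    mapDomain ((↑) : ℕ → ℤ) f = mapDomain (fun n : ℕ => -(n : ℤ)) g ↔
      ∃ n, f = single 0 n ∧ g = single 0 n := by
  constructor
  · intro h
    have hf (k : ℕ) : f k = mapDomain (fun n : ℕ => -(n : ℤ)) g k := by
      rw [← h, mapDomain_apply Nat.cast_injective]
    have hg (k : ℕ) : g k = mapDomain ((↑) : ℕ → ℤ) f (-(k : ℤ)) := by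
      rw [h, mapDomain_apply neg_natCast_injective]
    refine ⟨g 0, ?_, ?_⟩ <;> ext k <;> rcases eq_or_ne k 0 with rfl | hk
    · rw [hf, show ((0 : ℕ) : ℤ) = -((0 : ℕ) : ℤ) by simp,
        mapDomain_apply neg_natCast_injective, single_eq_same]
    · rw [hf, mapDomain_of_notMem_range, single_eq_of_ne hk]
      rintro ⟨m, hm⟩
      dsimp only at hm
      omega
    · rw [single_eq_same]
    · rw [hg, mapDomain_of_notMem_range, single_eq_of_ne hk]
      rintro ⟨m, hm⟩
      omega
  · rintro ⟨n, rfl, rfl⟩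
    simp

theorem exists_mapDomain_natCast_add_mapDomain_neg_natCast_eq (h : ℤ →₀ N) :
    ∃ f g : ℕ →₀ N,
      mapDomain ((↑) : ℕ → ℤ) f + mapDomain (fun n : ℕ => -(n : ℤ)) g = h := by
  -- `n ↦ n` and `n ↦ -n-1` partition `ℤ`, and `n ↦ -n-1` is `n ↦ -n` after the shift `n ↦ n+1`.
  have hcover (k : ℤ) : k ∈ Set.range ((↑) : ℕ → ℤ) ∪ Set.range fun n : ℕ => -(n : ℤ) - 1 := by
    rcases le_or_gt 0 k with hk | hk
    · exact .inl ⟨k.toNat, by omega⟩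
    · exact .inr ⟨(-k - 1).toNat, by beta_reduce; omega⟩
  obtain ⟨f, g, hfg⟩ := exists_mapDomain_add_mapDomain_eq (e₂ := fun n : ℕ => -(n : ℤ) - 1)
    Nat.cast_injective ((sub_left_injective (b := (1 : ℤ))).comp neg_natCast_injective)
    (Set.disjoint_left.mpr <| by rintro _ ⟨a, rfl⟩ ⟨b, hb⟩; dsimp only at hb; omega) h
    fun k hk => (hk (hcover k)).elim
  refine ⟨f, mapDomain Nat.succ g, ?_⟩
  rw [← mapDomain_comp, ← hfg]
  congr 2
  funext n
  simp only [Function.comp_apply, Nat.cast_succ]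
  ring

theorem mapDomain_natCast_add_mapDomain_neg_natCast_sub_two_eq_zero_iff {f g : ℕ →₀ N} :
    mapDomain ((↑) : ℕ → ℤ) f + mapDomain (fun n : ℕ => -(n : ℤ) - 2) g = 0 ↔
      f = 0 ∧ g = 0 := by
  refine ⟨eq_zero_of_mapDomain_add_mapDomain_eq_zero Nat.cast_injective
    neg_natCast_sub_two_injective disjoint_range_natCast_range_neg_natCast_sub_two, ?_⟩
  rintro ⟨rfl, rfl⟩
  simp

theorem exists_mapDomain_natCast_add_mapDomain_neg_natCast_sub_two_eq_iff (h : ℤ →₀ N) :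
    (∃ f g : ℕ →₀ N,
      mapDomain ((↑) : ℕ → ℤ) f + mapDomain (fun n : ℕ => -(n : ℤ) - 2) g = h) ↔
      h (-1) = 0 := by
  constructor
  · rintro ⟨f, g, rfl⟩
    rw [Finsupp.add_apply, mapDomain_of_notMem_range, mapDomain_of_notMem_range, add_zero]
    all_goals rintro ⟨m, hm⟩; beta_reduce at hm; omega
  · intro h₁
    have hcover (k : ℤ) (hk : k ≠ -1) :
        k ∈ Set.range ((↑) : ℕ → ℤ) ∪ Set.range fun n : ℕ => -(n : ℤ) - 2 := by
      rcases le_or_gt 0 k with hk' | hk'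
      · exact .inl ⟨k.toNat, by omega⟩
      · exact .inr ⟨(-k - 2).toNat, by beta_reduce; omega⟩
    refine exists_mapDomain_add_mapDomain_eq Nat.cast_injective neg_natCast_sub_two_injective
      disjoint_range_natCast_range_neg_natCast_sub_two h fun k hk => ?_
    obtain rfl : k = -1 := not_ne_iff.mp fun hk₁ => hk (hcover k hk₁)
    exact h₁

end Finsupp

section Coefficients

open Finsupp

variable (N : Type*) [AddCommGroup N] [Module R N]

def polyCoeffEquiv : N ⊗[R] R[X] ≃ₗ[R] (ℕ →₀ N) :=
  (LinearEquiv.lTensor N ((toFinsuppIsoLinear R).trans (AddMonoidAlgebra.coeffLinearEquiv R))).trans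
    (finsuppScalarRight R R N ℕ)

def laurentCoeffEquiv : N ⊗[R] R[T;T⁻¹] ≃ₗ[R] (ℤ →₀ N) :=
  (LinearEquiv.lTensor N (AddMonoidAlgebra.coeffLinearEquiv R)).trans (finsuppScalarRight R R N ℤ)

variable {N}

theorem polyCoeffEquiv_tmul_X_pow (n : N) (k : ℕ) :
    polyCoeffEquiv R N (n ⊗ₜ (X ^ k)) = single k n := by
  ext i
  simp [polyCoeffEquiv, finsuppScalarRight_apply_tmul_apply, Polynomial.X_pow_eq_monomial,
    single_apply]

theorem polyCoeffEquiv_tmul_one (n : N) : polyCoeffEquiv R N (n ⊗ₜ 1) = single 0 n := by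
  simpa using polyCoeffEquiv_tmul_X_pow R n 0

theorem laurentCoeffEquiv_tmul_T (n : N) (k : ℤ) :
    laurentCoeffEquiv R N (n ⊗ₜ T k) = single k n := by
  have hT : AddMonoidAlgebra.coeffLinearEquiv R (T k : R[T;T⁻¹]) = single k 1 := rfl
  ext i
  rw [laurentCoeffEquiv, LinearEquiv.trans_apply, LinearEquiv.lTensor_tmul, hT,
    finsuppScalarRight_apply_tmul_apply]
  simp [single_apply]

theorem laurentCoeffEquiv_lTensor {φ : R[X] →ₗ[R] R[T;T⁻¹]} {e : ℕ → ℤ}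
    (hφ : ∀ k, φ (X ^ k) = T (e k)) (x : N ⊗[R] R[X]) :
    laurentCoeffEquiv R N (φ.lTensor N x) = mapDomain e (polyCoeffEquiv R N x) := by
  obtain ⟨f, rfl⟩ := (polyCoeffEquiv R N).symm.surjective x
  rw [LinearEquiv.apply_symm_apply]
  induction f using Finsupp.induction_linear with
  | zero => simp
  | add f g hf hg => simp only [map_add, hf, hg, mapDomain_add]
  | single k n =>
    rw [mapDomain_single, ← polyCoeffEquiv_tmul_X_pow R n k, LinearEquiv.symm_apply_apply,
      LinearMap.lTensor_tmul, hφ, laurentCoeffEquiv_tmul_T]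

end Coefficients

section Components

open Finsupp

variable {N : Type*} [AddCommGroup N] [Module R N]

theorem laurentCoeffEquiv_indT (x : N ⊗[R] R[X]) :
    laurentCoeffEquiv R N (indT R N x) = mapDomain ((↑) : ℕ → ℤ) (polyCoeffEquiv R N x) :=
  laurentCoeffEquiv_lTensor R (fun k => by simp [toLaurent_X_pow]) x

theorem laurentCoeffEquiv_indTinv (x : N ⊗[R] R[X]) :
    laurentCoeffEquiv R N (indTinv R N x) =
      mapDomain (fun n : ℕ => -(n : ℤ)) (polyCoeffEquiv R N x) :=
  laurentCoeffEquiv_lTensor R (fun k => by simp [T_pow]) x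

theorem laurentCoeffEquiv_mulTinvSq_indTinv (x : N ⊗[R] R[X]) :
    laurentCoeffEquiv R N (mulTinvSq R N (indTinv R N x)) =
      mapDomain (fun n : ℕ => -(n : ℤ) - 2) (polyCoeffEquiv R N x) := by
  rw [mulTinvSq, indTinv, ← LinearMap.comp_apply, ← LinearMap.lTensor_comp]
  refine laurentCoeffEquiv_lTensor R (fun k => ?_) x
  rw [LinearMap.comp_apply, AlgHom.toLinearMap_apply, map_pow, aeval_X, LinearMap.mulLeft_apply,
    T_pow, ← T_add]
  congr 1
  ring

theorem indT_eq_indTinv_iff (u v : N ⊗[R] R[X]) :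
    indT R N u = indTinv R N v ↔ ∃ n : N, u = n ⊗ₜ 1 ∧ v = n ⊗ₜ 1 := by
  rw [← (laurentCoeffEquiv R N).injective.eq_iff, laurentCoeffEquiv_indT,
    laurentCoeffEquiv_indTinv, mapDomain_natCast_eq_mapDomain_neg_natCast_iff]
  simp only [← polyCoeffEquiv_tmul_one R, (polyCoeffEquiv R N).injective.eq_iff]

theorem exists_indT_add_indTinv_eq (x : N ⊗[R] R[T;T⁻¹]) :
    ∃ u v : N ⊗[R] R[X], indT R N u + indTinv R N v = x := by
  obtain ⟨f, g, hfg⟩ :=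
    exists_mapDomain_natCast_add_mapDomain_neg_natCast_eq (laurentCoeffEquiv R N x)
  refine ⟨(polyCoeffEquiv R N).symm f, (polyCoeffEquiv R N).symm g,
    (laurentCoeffEquiv R N).injective ?_⟩
  rw [map_add, laurentCoeffEquiv_indT, laurentCoeffEquiv_indTinv,
    LinearEquiv.apply_symm_apply, LinearEquiv.apply_symm_apply, hfg]

theorem indT_add_mulTinvSq_indTinv_eq_zero_iff (u v : N ⊗[R] R[X]) :
    indT R N u + mulTinvSq R N (indTinv R N v) = 0 ↔ u = 0 ∧ v = 0 := by
  rw [← (laurentCoeffEquiv R N).map_eq_zero_iff, map_add, laurentCoeffEquiv_indT,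
    laurentCoeffEquiv_mulTinvSq_indTinv,
    mapDomain_natCast_add_mapDomain_neg_natCast_sub_two_eq_zero_iff,
    (polyCoeffEquiv R N).map_eq_zero_iff, (polyCoeffEquiv R N).map_eq_zero_iff]

theorem exists_indT_add_mulTinvSq_indTinv_eq_iff (x : N ⊗[R] R[T;T⁻¹]) :
    (∃ u v : N ⊗[R] R[X], indT R N u + mulTinvSq R N (indTinv R N v) = x) ↔
      laurentCoeffEquiv R N x (-1) = 0 := by
  simp only [← exists_mapDomain_natCast_add_mapDomain_neg_natCast_sub_two_eq_iff,
    (polyCoeffEquiv R N).surjective.exists, ← (laurentCoeffEquiv R N).injective.eq_iff, map_add,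
    laurentCoeffEquiv_indT, laurentCoeffEquiv_mulTinvSq_indTinv]

end Components

theorem IminusJ_apply (u v : M ⊗[R] R[X]) (u' v' : M' ⊗[R] R[X]) :
    IminusJ R M M' ((u, u'), (v, v')) =
      (indT R M u - indTinv R M v, indT R M' u' + mulTinvSq R M' (indTinv R M' v')) := by
  simp only [IminusJ, Imap, Jmap, LinearMap.sub_apply, LinearMap.comp_apply, LinearMap.fst_apply,
    LinearMap.snd_apply, LinearMap.prodMap_apply, LinearMap.neg_apply, Prod.mk_sub_mk,
    sub_neg_eq_add]

theorem firstMap_apply (m : M) :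
    firstMap R M M' m = ((m ⊗ₜ 1, 0), (m ⊗ₜ 1, 0)) :=
  rfl

theorem toCokerIminusJ_apply (m' : M') :
    toCokerIminusJ R M M' m' = Submodule.Quotient.mk (0, m' ⊗ₜ T (-1)) :=
  rfl

theorem firstMap_injective : Function.Injective (firstMap R M M') := by
  intro m₁ m₂ h
  have h₁ : m₁ ⊗ₜ[R] (1 : R[X]) = m₂ ⊗ₜ 1 := congrArg (·.1.1) h
  apply Finsupp.single_injective 0
  rw [← polyCoeffEquiv_tmul_one R, ← polyCoeffEquiv_tmul_one R, h₁]

theorem exact_firstMap_IminusJ : Function.Exact (firstMap R M M') (IminusJ R M M') := by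
  rintro ⟨⟨u, u'⟩, v, v'⟩
  rw [IminusJ_apply, Prod.mk_eq_zero, sub_eq_zero, indT_eq_indTinv_iff,
    indT_add_mulTinvSq_indTinv_eq_zero_iff]
  constructor
  · rintro ⟨⟨n, rfl, rfl⟩, rfl, rfl⟩
    exact ⟨n, rfl⟩
  · rintro ⟨n, ⟨⟩⟩
    exact ⟨⟨n, rfl, rfl⟩, rfl, rfl⟩

theorem toCokerIminusJ_injective : Function.Injective (toCokerIminusJ R M M') := by
  refine (injective_iff_map_eq_zero _).mpr fun m' h => ?_
  rw [toCokerIminusJ_apply, Submodule.Quotient.mk_eq_zero] at h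
  obtain ⟨⟨⟨u, u'⟩, v, v'⟩, huv⟩ := h
  rw [IminusJ_apply, Prod.mk.injEq] at huv
  simpa [laurentCoeffEquiv_tmul_T] using
    (exists_indT_add_mulTinvSq_indTinv_eq_iff R _).mp ⟨u', v', huv.2⟩

theorem toCokerIminusJ_surjective : Function.Surjective (toCokerIminusJ R M M') := by
  intro q
  obtain ⟨⟨x, y⟩, rfl⟩ := Submodule.Quotient.mk_surjective _ q
  set m' := laurentCoeffEquiv R M' y (-1)
  obtain ⟨u, v, huv⟩ := exists_indT_add_indTinv_eq R x
  obtain ⟨u', v', huv'⟩ := (exists_indT_add_mulTinvSq_indTinv_eq_iff R (y - m' ⊗ₜ T (-1))).mpr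
    (by simp [laurentCoeffEquiv_tmul_T, m'])
  refine ⟨m', ?_⟩
  rw [toCokerIminusJ_apply, eq_comm, Submodule.Quotient.eq]
  refine ⟨((u, u'), (-v, v')), ?_⟩
  rw [IminusJ_apply, map_neg, sub_neg_eq_add, huv, huv', Prod.mk_sub_mk, sub_zero]

/-- (a) The sequence `0 → M → T(R[X]) ⊕ T(R[Y]) → T(R[t,t⁻¹])` is exact, where the first map
sends `m` to `((m ⊗ 1, 0), (m ⊗ 1, 0))` and the second sends `(u, v)` to `I(u) − J(v)`;
(b) the map `M′ → coker(I − J)` sending `m′` to the class of `(0, m′ ⊗ t⁻¹)` is an isomorphism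
of `R`-modules. -/
theorem bass_fundamental_exact_algebraic :
    (Function.Injective (firstMap R M M') ∧
      Function.Exact (firstMap R M M') (IminusJ R M M')) ∧
    Function.Bijective (toCokerIminusJ R M M') :=
  ⟨⟨firstMap_injective R M M', exact_firstMap_IminusJ R M M'⟩,
    toCokerIminusJ_injective R M M', toCokerIminusJ_surjective R M M'⟩

end
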